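/- Let (X,d) be a proper metric space, let σ be a conical geodesic bicombing on X, let x, y ∈ X, and let n ≥ 1 be an integer. Then there exist unique points p₀, p₁, …, pₙ ∈ X such that p₀ = x, pₙ = y, and p_i = σ(p_{i−1}, p_{i+1}, 1/2) for all 1 ≤ i ≤ n−1. Moreover, the map σ⁽ⁿ⁾ : X × X × [0,1] → X defined by σ⁽ⁿ⁾(x, y, (1−λ)·(i/n) + λ·((i+1)/n)) = σ(p_i, p_{i+1}, λ) for λ ∈ [0,1] and 0 ≤ i ≤ n−1 (with p_i = p_i(x,y) the unique points above) is a conical geodesic bicombing on X. -/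

import Mathlib

/-- A geodesic bicombing on a metric space `X`: a map `σ : X × X × [0,1] → X` such that
`σ x y 0 = x`, `σ x y 1 = y` and `dist (σ x y s) (σ x y t) = |s - t| * dist x y`
for all `s, t ∈ [0,1]`. -/
def IsGeodesicBicombing {X : Type*} [MetricSpace X] (σ : X → X → ℝ → X) : Prop :=
  (∀ x y : X, σ x y 0 = x) ∧ (∀ x y : X, σ x y 1 = y) ∧
    ∀ x y : X, ∀ s ∈ Set.Icc (0:ℝ) 1, ∀ t ∈ Set.Icc (0:ℝ) 1,
      dist (σ x y s) (σ x y t) = |s - t| * dist x y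

/-- A bicombing is conical if
`dist (σ x y t) (σ x' y' t) ≤ (1 - t) * dist x x' + t * dist y y'` for all `t ∈ [0,1]`. -/
def IsConical {X : Type*} [MetricSpace X] (σ : X → X → ℝ → X) : Prop :=
  ∀ x y x' y' : X, ∀ t ∈ Set.Icc (0:ℝ) 1,
    dist (σ x y t) (σ x' y' t) ≤ (1 - t) * dist x x' + t * dist y y'

/-- A bicombing is reversible if `σ x y t = σ y x (1 - t)` for all `t ∈ [0,1]`. -/
def IsReversible {X : Type*} [MetricSpace X] (σ : X → X → ℝ → X) : Prop :=
  ∀ x y : X, ∀ t ∈ Set.Icc (0:ℝ) 1, σ x y t = σ y x (1 - t)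

/-- The defining conditions of the subdivision points: `p 0 = x`, `p n = y`, and
`p i = σ (p (i-1)) (p (i+1)) (1/2)` for `1 ≤ i ≤ n - 1`. -/
def IsMidpointChain {X : Type*} [MetricSpace X] (σ : X → X → ℝ → X) (n : ℕ)
    (x y : X) (p : ℕ → X) : Prop :=
  p 0 = x ∧ p n = y ∧ ∀ i : ℕ, 1 ≤ i → i + 1 ≤ n → p i = σ (p (i - 1)) (p (i + 1)) (1/2)

/-!
Conicality makes `i ↦ dist (p i) (q i)` discretely convex, `2 h i ≤ h (i - 1) + h (i + 1)`,
whenever `p` and `q` are midpoint chains, or successive iterates of the relaxation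
`p i ↦ σ (p (i - 1)) (p (i + 1)) (1/2)` with pinned ends. Comparing with the tent `i (n - i)`,
whose discrete Laplacian is `-2`, such a quantity shrinks by the factor `1 - 1/n²` per relaxation
step. Hence the relaxation converges to a chain, and (for chains) the discrete maximum principle
holds: two chains satisfy `dist (p i) (q i) ≤ (1 - i/n) dist x x' + (i/n) dist y y'`. This gives
uniqueness; against the constant chain at `y` it shows that the (equal) steps of a chain have
length `dist x y / n`, so the chain is a discrete geodesic and its σ-segments concatenate to a
geodesic; interpolated along these segments it gives the conicality of σ⁽ⁿ⁾.
-/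

open Filter Topology Set

section DiscreteConvexity

theorem one_sub_inv_sq_nonneg {n : ℕ} (hn : 1 ≤ n) : 0 ≤ 1 - 1 / (n : ℝ) ^ 2 := by
  have : (1 : ℝ) ≤ (n : ℝ) ^ 2 := one_le_pow₀ (by exact_mod_cast hn)
  rw [sub_nonneg, div_le_one (by positivity)]
  exact this

theorem one_sub_inv_sq_lt_one {n : ℕ} (hn : 1 ≤ n) : 1 - 1 / (n : ℝ) ^ 2 < 1 := by
  have : (0 : ℝ) < n := by exact_mod_cast hn
  linarith [show 0 < 1 / (n : ℝ) ^ 2 by positivity]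

/-- The tent `i ↦ i (n - i)` has discrete Laplacian `-2` and is at most `n²`. -/
theorem tent_average_le {n i : ℝ} (hi : 1 ≤ i) (hin : i + 1 ≤ n) :
    ((i - 1) * (n - (i - 1)) + (i + 1) * (n - (i + 1))) / 2 ≤ (1 - 1 / n ^ 2) * (i * (n - i)) := by
  have hn : 0 < n := by linarith
  have htent : i * (n - i) / n ^ 2 ≤ 1 := by
    rw [div_le_one (by positivity)]
    nlinarith
  have : (1 - 1 / n ^ 2) * (i * (n - i)) = i * (n - i) - i * (n - i) / n ^ 2 := by ring
  linarith

theorem le_geometric_of_two_mul_le_add {n : ℕ} {e : ℕ → ℕ → ℝ} {E : ℝ} (hE : 0 ≤ E)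
    (h0 : ∀ k, e k 0 ≤ 0) (hn : ∀ k, e k n ≤ 0)
    (hinit : ∀ i, 1 ≤ i → i + 1 ≤ n → e 0 i ≤ E)
    (hstep : ∀ k i, 1 ≤ i → i + 1 ≤ n → 2 * e (k + 1) i ≤ e k (i - 1) + e k (i + 1))
    (k : ℕ) {i : ℕ} (hi : i ≤ n) :
    e k i ≤ (1 - 1 / (n : ℝ) ^ 2) ^ k * (i * (n - i) * E) := by
  induction k generalizing i with
  | zero => ?_
  | succ k ih => ?_
  all_goals
    obtain rfl | rfl | ⟨hi1, hin⟩ : i = 0 ∨ i = n ∨ (1 ≤ i ∧ i + 1 ≤ n) := by omega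
    · simpa using h0 _
    · simpa using hn _
    have hi1' : (1 : ℝ) ≤ i := by exact_mod_cast hi1
    have hin' : (i : ℝ) + 1 ≤ n := by exact_mod_cast hin
  · have : (1 : ℝ) ≤ i * (n - i) := by nlinarith
    simpa using (hinit i hi1 hin).trans (le_mul_of_one_le_left hE this)
  · have hprev := ih (i := i - 1) (by omega)
    have hnext := ih (i := i + 1) hin
    rw [Nat.cast_sub hi1, Nat.cast_one] at hprev
    rw [Nat.cast_add_one] at hnext
    have hKE : 0 ≤ (1 - 1 / (n : ℝ) ^ 2) ^ k * E :=
      mul_nonneg (pow_nonneg (one_sub_inv_sq_nonneg (by omega)) k) hE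
    have htent := mul_le_mul_of_nonneg_left (tent_average_le hi1' hin') hKE
    have := hstep k i hi1 hin
    rw [pow_succ]
    nlinarith

theorem le_zero_of_two_mul_le_add {n : ℕ} {h : ℕ → ℝ} (h0 : h 0 ≤ 0) (hn : h n ≤ 0)
    (hconv : ∀ i, 1 ≤ i → i + 1 ≤ n → 2 * h i ≤ h (i - 1) + h (i + 1)) {i : ℕ} (hi : i ≤ n) :
    h i ≤ 0 := by
  obtain rfl | rfl | ⟨hi1, hin⟩ : i = 0 ∨ i = n ∨ (1 ≤ i ∧ i + 1 ≤ n) := by omega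
  · exact h0
  · exact hn
  set E := ∑ j ∈ Finset.range (n + 1), |h j|
  have hE : ∀ j ≤ n, h j ≤ E := fun j hj =>
    (le_abs_self _).trans (Finset.single_le_sum (fun j _ => abs_nonneg (h j))
      (Finset.mem_range.2 (Nat.lt_succ_of_le hj)))
  have hdecay := le_geometric_of_two_mul_le_add (e := fun _ => h) (E := E)
    (Finset.sum_nonneg fun j _ => abs_nonneg (h j)) (fun _ => h0) (fun _ => hn)
    (fun j _ hj => hE j (by omega)) (fun _ => hconv) (i := i) (hi := hi)
  have hlim := (tendsto_pow_atTop_nhds_zero_of_lt_one (one_sub_inv_sq_nonneg (n := n) (by omega))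
    (one_sub_inv_sq_lt_one (by omega))).mul_const ((i : ℝ) * (n - i) * E)
  rw [zero_mul] at hlim
  exact ge_of_tendsto' hlim hdecay

theorem le_chord_of_two_mul_le_add {n : ℕ} {h : ℕ → ℝ}
    (hconv : ∀ i, 1 ≤ i → i + 1 ≤ n → 2 * h i ≤ h (i - 1) + h (i + 1)) {i : ℕ} (hi : i ≤ n) :
    h i ≤ (1 - i / n) * h 0 + (i / n) * h n := by
  set chord : ℕ → ℝ := fun j => (1 - j / n) * h 0 + (j / n) * h n
  suffices h i - chord i ≤ 0 by linarith
  refine le_zero_of_two_mul_le_add (h := fun j => h j - chord j) (by simp [chord]) ?_ ?_ hi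
  · rcases eq_or_ne n 0 with rfl | hn
    · simp [chord]
    · simp [chord, hn]
  · intro j hj1 hjn
    have hchord : chord (j - 1) + chord (j + 1) = 2 * chord j := by
      simp only [chord]
      push_cast [hj1]
      ring
    linarith [hconv j hj1 hjn]

end DiscreteConvexity

section Bicombing

variable {X : Type*} [MetricSpace X] {σ : X → X → ℝ → X}

theorem one_half_mem_Icc : (1 / 2 : ℝ) ∈ Icc (0 : ℝ) 1 := ⟨by norm_num, by norm_num⟩

theorem IsGeodesicBicombing.dist_left (hσ : IsGeodesicBicombing σ) (x y : X) {t : ℝ}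
    (ht : t ∈ Icc (0 : ℝ) 1) : dist x (σ x y t) = t * dist x y := by
  have := hσ.2.2 x y 0 (left_mem_Icc.2 zero_le_one) t ht
  rwa [hσ.1, zero_sub, abs_neg, abs_of_nonneg ht.1] at this

theorem IsGeodesicBicombing.dist_right (hσ : IsGeodesicBicombing σ) (x y : X) {t : ℝ}
    (ht : t ∈ Icc (0 : ℝ) 1) : dist (σ x y t) y = (1 - t) * dist x y := by
  have := hσ.2.2 x y t ht 1 (right_mem_Icc.2 zero_le_one)
  rwa [hσ.2.1, abs_sub_comm, abs_of_nonneg (sub_nonneg.2 ht.2)] at this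

theorem IsGeodesicBicombing.apply_self (hσ : IsGeodesicBicombing σ) (x : X) {t : ℝ}
    (ht : t ∈ Icc (0 : ℝ) 1) : σ x x t = x :=
  (dist_eq_zero.1 (by simp [hσ.dist_left x x ht])).symm

theorem IsConical.two_mul_dist_midpoint_le (hcon : IsConical σ) (x y x' y' : X) :
    2 * dist (σ x y (1 / 2)) (σ x' y' (1 / 2)) ≤ dist x x' + dist y y' := by
  linarith [hcon x y x' y' (1 / 2) one_half_mem_Icc]

theorem IsConical.lipschitzWith (hcon : IsConical σ) {t : ℝ} (ht : t ∈ Icc (0 : ℝ) 1) :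
    LipschitzWith 1 fun q : X × X => σ q.1 q.2 t := by
  refine LipschitzWith.of_dist_le_mul fun q q' => ?_
  rw [NNReal.coe_one, one_mul, Prod.dist_eq]
  calc dist (σ q.1 q.2 t) (σ q'.1 q'.2 t)
      ≤ (1 - t) * dist q.1 q'.1 + t * dist q.2 q'.2 := hcon _ _ _ _ t ht
    _ ≤ (1 - t) * max (dist q.1 q'.1) (dist q.2 q'.2) + t * max (dist q.1 q'.1) (dist q.2 q'.2) := by
        gcongr
        · linarith [ht.2]
        · exact le_max_left _ _
        · exact ht.1
        · exact le_max_right _ _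
    _ = max (dist q.1 q'.1) (dist q.2 q'.2) := by ring

end Bicombing

section MidpointChain

variable {X : Type*} [MetricSpace X] {σ : X → X → ℝ → X} {n : ℕ} {x y x' y' : X} {p q : ℕ → X}

theorem isMidpointChain_const (hσ : IsGeodesicBicombing σ) (n : ℕ) (x : X) :
    IsMidpointChain σ n x x fun _ => x :=
  ⟨rfl, rfl, fun _ _ _ => (hσ.apply_self x one_half_mem_Icc).symm⟩

theorem IsMidpointChain.dist_le_chord (hcon : IsConical σ) (hp : IsMidpointChain σ n x y p)
    (hq : IsMidpointChain σ n x' y' q) {i : ℕ} (hi : i ≤ n) :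
    dist (p i) (q i) ≤ (1 - i / n) * dist x x' + (i / n) * dist y y' := by
  have := le_chord_of_two_mul_le_add (h := fun j => dist (p j) (q j)) (fun j hj1 hjn => by
    simpa only [← hp.2.2 j hj1 hjn, ← hq.2.2 j hj1 hjn] using
      hcon.two_mul_dist_midpoint_le (p (j - 1)) (p (j + 1)) (q (j - 1)) (q (j + 1))) hi
  rwa [hp.1, hq.1, hp.2.1, hq.2.1] at this

theorem IsMidpointChain.eq (hcon : IsConical σ) (hp : IsMidpointChain σ n x y p)
    (hq : IsMidpointChain σ n x y q) {i : ℕ} (hi : i ≤ n) : q i = p i :=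
  dist_le_zero.1 (by simpa using hq.dist_le_chord hcon hp hi)

theorem IsMidpointChain.dist_succ_eq (hσ : IsGeodesicBicombing σ) (hp : IsMidpointChain σ n x y p)
    {i : ℕ} (hi : i + 1 ≤ n) : dist (p i) (p (i + 1)) = dist (p 0) (p 1) := by
  induction i with
  | zero => rfl
  | succ i ih =>
    rw [← ih (by omega)]
    have hmid := hp.2.2 (i + 1) (by omega) hi
    rw [Nat.add_sub_cancel] at hmid
    rw [hmid, hσ.dist_left _ _ one_half_mem_Icc, hσ.dist_right _ _ one_half_mem_Icc]
    ring

theorem dist_le_mul_of_dist_succ_eq {p : ℕ → X} {δ : ℝ}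
    (hstep : ∀ i, i + 1 ≤ n → dist (p i) (p (i + 1)) = δ) {i j : ℕ} (hij : i ≤ j) (hjn : j ≤ n) :
    dist (p i) (p j) ≤ (j - i) * δ :=
  calc dist (p i) (p j) ≤ ∑ k ∈ Finset.Ico i j, dist (p k) (p (k + 1)) := dist_le_Ico_sum_dist p hij
    _ = ∑ k ∈ Finset.Ico i j, δ :=
        Finset.sum_congr rfl fun k hk => hstep k (by have := (Finset.mem_Ico.1 hk).2; omega)
    _ = (j - i) * δ := by simp [Nat.cast_sub hij]

theorem dist_eq_mul_of_dist_succ_eq {p : ℕ → X} {δ : ℝ}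
    (hstep : ∀ i, i + 1 ≤ n → dist (p i) (p (i + 1)) = δ) (htot : dist (p 0) (p n) = n * δ)
    {i j : ℕ} (hij : i ≤ j) (hjn : j ≤ n) : dist (p i) (p j) = (j - i) * δ := by
  refine le_antisymm (dist_le_mul_of_dist_succ_eq hstep hij hjn) ?_
  have hfirst := dist_le_mul_of_dist_succ_eq hstep (Nat.zero_le i) (hij.trans hjn)
  have hlast := dist_le_mul_of_dist_succ_eq hstep hjn le_rfl
  have := dist_triangle4 (p 0) (p i) (p j) (p n)
  push_cast at hfirst
  linarith

theorem IsMidpointChain.dist_eq (hσ : IsGeodesicBicombing σ) (hcon : IsConical σ) (hn : 1 ≤ n)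
    (hp : IsMidpointChain σ n x y p) {i j : ℕ} (hij : i ≤ j) (hjn : j ≤ n) :
    dist (p i) (p j) = (j - i) * (dist x y / n) := by
  have hn0 : (0 : ℝ) < n := by exact_mod_cast hn
  set δ := dist (p 0) (p 1)
  have hstep : ∀ k, k + 1 ≤ n → dist (p k) (p (k + 1)) = δ := fun k hk => hp.dist_succ_eq hσ hk
  have hlast : dist (p (n - 1)) y ≤ dist x y / n := by
    have := hp.dist_le_chord hcon (isMidpointChain_const hσ n y) (i := n - 1) (by omega)
    rw [dist_self, mul_zero, add_zero, Nat.cast_sub hn, Nat.cast_one] at this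
    rwa [show (1 - (n - 1 : ℝ) / n) = 1 / n by field_simp; ring, one_div_mul_eq_div] at this
  have hδ_le : δ ≤ dist x y / n := by
    rw [← hstep (n - 1) (by omega), Nat.sub_add_cancel hn, hp.2.1]
    exact hlast
  have hle : dist x y ≤ n * δ := by
    simpa [hp.1, hp.2.1] using dist_le_mul_of_dist_succ_eq hstep (Nat.zero_le n) le_rfl
  have hδ : δ = dist x y / n := le_antisymm hδ_le (by rw [div_le_iff₀ hn0]; linarith)
  rw [← hδ]
  refine dist_eq_mul_of_dist_succ_eq hstep ?_ hij hjn
  rw [hp.1, hp.2.1, hδ]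
  field_simp

end MidpointChain

section Relaxation

variable {X : Type*} {σ : X → X → ℝ → X} {n : ℕ} {x y : X}

noncomputable def midpointRelax (σ : X → X → ℝ → X) (n : ℕ) (x y : X) (p : ℕ → X) (i : ℕ) : X :=
  if i = 0 then x else if n ≤ i then y else σ (p (i - 1)) (p (i + 1)) (1 / 2)

noncomputable def relaxedChain (σ : X → X → ℝ → X) (n : ℕ) (x y : X) (k : ℕ) : ℕ → X :=
  (midpointRelax σ n x y)^[k] fun i => if i = 0 then x else y

theorem relaxedChain_succ (k : ℕ) :
    relaxedChain σ n x y (k + 1) = midpointRelax σ n x y (relaxedChain σ n x y k) :=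
  Function.iterate_succ_apply' _ _ _

theorem relaxedChain_apply_zero (k : ℕ) : relaxedChain σ n x y k 0 = x := by
  cases k with
  | zero => simp [relaxedChain]
  | succ k => simp [relaxedChain_succ, midpointRelax]

theorem relaxedChain_apply_of_le (hn : 1 ≤ n) (k : ℕ) {i : ℕ} (hi : n ≤ i) :
    relaxedChain σ n x y k i = y := by
  have hi0 : i ≠ 0 := by omega
  cases k with
  | zero => simp [relaxedChain, hi0]
  | succ k => simp [relaxedChain_succ, midpointRelax, hi0, hi]

theorem relaxedChain_succ_apply (k : ℕ) {i : ℕ} (hi1 : 1 ≤ i) (hin : i + 1 ≤ n) :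
    relaxedChain σ n x y (k + 1) i =
      σ (relaxedChain σ n x y k (i - 1)) (relaxedChain σ n x y k (i + 1)) (1 / 2) := by
  rw [relaxedChain_succ, midpointRelax, if_neg (by omega), if_neg (by omega)]

variable [MetricSpace X]

theorem dist_relaxedChain_succ_le (hσ : IsGeodesicBicombing σ) (hcon : IsConical σ)
    (hn : 1 ≤ n) (k : ℕ) {i : ℕ} (hi : i ≤ n) :
    dist (relaxedChain σ n x y k i) (relaxedChain σ n x y (k + 1) i) ≤
      (1 - 1 / (n : ℝ) ^ 2) ^ k * (i * (n - i) * dist x y) := by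
  refine le_geometric_of_two_mul_le_add (e := fun k i =>
    dist (relaxedChain σ n x y k i) (relaxedChain σ n x y (k + 1) i)) dist_nonneg
    (fun k => by simp [relaxedChain_apply_zero]) (fun k => by simp [relaxedChain_apply_of_le hn])
    (fun i hi1 hin => ?_) (fun k i hi1 hin => ?_) k hi
  · have hprev : dist (relaxedChain σ n x y 0 (i - 1)) y ≤ dist x y := by
      by_cases h : i - 1 = 0 <;> simp [relaxedChain, h]
    have hyi : relaxedChain σ n x y 0 i = y := by simp [relaxedChain]; omega
    have hyi' : relaxedChain σ n x y 0 (i + 1) = y := by simp [relaxedChain]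
    rw [relaxedChain_succ_apply 0 hi1 hin, hyi, hyi', dist_comm, hσ.dist_right _ _ one_half_mem_Icc]
    linarith [dist_nonneg (x := relaxedChain σ n x y 0 (i - 1)) (y := y)]
  · rw [relaxedChain_succ_apply k hi1 hin, relaxedChain_succ_apply (k + 1) hi1 hin]
    exact hcon.two_mul_dist_midpoint_le _ _ _ _

end Relaxation

theorem exists_isMidpointChain {X : Type*} [MetricSpace X] [CompleteSpace X]
    {σ : X → X → ℝ → X} {n : ℕ} (hσ : IsGeodesicBicombing σ) (hcon : IsConical σ)
    (hn : 1 ≤ n) (x y : X) : ∃ p, IsMidpointChain σ n x y p := by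
  have : Nonempty X := ⟨x⟩
  set s := relaxedChain σ n x y
  have hlim : ∀ i ≤ n, Tendsto (s · i) atTop (𝓝 (limUnder atTop (s · i))) := fun i hi =>
    (cauchySeq_of_le_geometric _ _ (one_sub_inv_sq_lt_one hn) fun k => by
      rw [mul_comm]; exact dist_relaxedChain_succ_le hσ hcon hn k hi).tendsto_limUnder
  refine ⟨fun i => limUnder atTop (s · i), ?_, ?_, fun i hi1 hin => ?_⟩
  · exact tendsto_nhds_unique (hlim 0 (Nat.zero_le n)) (by simp [s, relaxedChain_apply_zero])
  · exact tendsto_nhds_unique (hlim n le_rfl) (by simp [s, relaxedChain_apply_of_le hn])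
  · refine tendsto_nhds_unique ((hlim i (by omega)).comp (tendsto_add_atTop_nat 1)) ?_
    simp only [Function.comp_def, s, relaxedChain_succ_apply _ hi1 hin]
    exact ((hcon.lipschitzWith one_half_mem_Icc).continuous.tendsto _).comp
      ((hlim (i - 1) (by omega)).prodMk_nhds (hlim (i + 1) hin))

section ChainPath

variable {X : Type*} {σ : X → X → ℝ → X} {n : ℕ} {p q : ℕ → X}

noncomputable def segIndex (n : ℕ) (s : ℝ) : ℕ := min ⌊s⌋₊ (n - 1)

noncomputable def chainPath (σ : X → X → ℝ → X) (n : ℕ) (p : ℕ → X) (s : ℝ) : X :=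
  σ (p (segIndex n s)) (p (segIndex n s + 1)) (s - segIndex n s)

theorem segIndex_add_one_le (hn : 1 ≤ n) (s : ℝ) : segIndex n s + 1 ≤ n := by
  unfold segIndex; omega

theorem segIndex_mono (n : ℕ) : Monotone (segIndex n) := fun _ _ hst =>
  min_le_min_right _ (Nat.floor_mono hst)

theorem sub_segIndex_mem_Icc (hn : 1 ≤ n) {s : ℝ} (hs : s ∈ Icc (0 : ℝ) n) :
    s - segIndex n s ∈ Icc (0 : ℝ) 1 := by
  constructor
  · have : (segIndex n s : ℝ) ≤ ⌊s⌋₊ := by exact_mod_cast min_le_left _ _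
    linarith [Nat.floor_le hs.1]
  · by_cases hc : ⌊s⌋₊ ≤ n - 1
    · rw [segIndex, min_eq_left hc]
      linarith [Nat.lt_floor_add_one s]
    · rw [segIndex, min_eq_right (by omega), Nat.cast_sub hn, Nat.cast_one]
      linarith [hs.2]

variable [MetricSpace X]

theorem chainPath_natCast_add (hσ : IsGeodesicBicombing σ) {i : ℕ} (hi : i + 1 ≤ n) {t : ℝ}
    (ht : t ∈ Icc (0 : ℝ) 1) : chainPath σ n p (i + t) = σ (p i) (p (i + 1)) t := by
  rcases ht.2.lt_or_eq with ht1 | rfl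
  · have : segIndex n (i + t) = i := by
      rw [segIndex, (Nat.floor_eq_iff (by linarith [ht.1, (i.cast_nonneg : (0 : ℝ) ≤ i)])).2
        ⟨by linarith [ht.1], by linarith⟩]
      omega
    simp [chainPath, this]
  · have hfl : ⌊(i : ℝ) + 1⌋₊ = i + 1 := by exact_mod_cast Nat.floor_natCast (R := ℝ) (i + 1)
    by_cases h : i + 2 ≤ n
    · have : segIndex n (i + 1) = i + 1 := by rw [segIndex, hfl]; omega
      simp [chainPath, this, hσ.1, hσ.2.1]
    · have : segIndex n (i + 1) = i := by rw [segIndex, hfl]; omega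
      simp [chainPath, this]

theorem dist_segment_points (hσ : IsGeodesicBicombing σ) {δ : ℝ}
    (hp : ∀ i j, i ≤ j → j ≤ n → dist (p i) (p j) = (j - i) * δ) {i j : ℕ} (hij : i ≤ j)
    (hjn : j + 1 ≤ n) {s t : ℝ} (hs : s ∈ Icc (0 : ℝ) 1) (ht : t ∈ Icc (0 : ℝ) 1)
    (hle : i + s ≤ j + t) :
    dist (σ (p i) (p (i + 1)) s) (σ (p j) (p (j + 1)) t) = (j + t - (i + s)) * δ := by
  have hstep : ∀ k, k + 1 ≤ n → dist (p k) (p (k + 1)) = δ := fun k hk => by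
    rw [hp k (k + 1) (by omega) hk]; push_cast; ring
  have hlow := dist_triangle4 (p i) (σ (p i) (p (i + 1)) s) (σ (p j) (p (j + 1)) t) (p (j + 1))
  rw [hp i (j + 1) (by omega) hjn, hσ.dist_left _ _ hs, hσ.dist_right _ _ ht, hstep i (by omega),
    hstep j hjn] at hlow
  push_cast at hlow
  refine le_antisymm ?_ (by linarith)
  rcases hij.lt_or_eq with hij | rfl
  · have hup := dist_triangle4 (σ (p i) (p (i + 1)) s) (p (i + 1)) (p j) (σ (p j) (p (j + 1)) t)
    rw [hσ.dist_right _ _ hs, hp (i + 1) j hij (by omega), hσ.dist_left _ _ ht, hstep i (by omega),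
      hstep j hjn] at hup
    push_cast at hup
    linarith
  · rw [hσ.2.2 _ _ s hs t ht, hstep i hjn, abs_of_nonpos (by linarith)]
    linarith

theorem dist_chainPath (hσ : IsGeodesicBicombing σ) (hn : 1 ≤ n) {δ : ℝ}
    (hp : ∀ i j, i ≤ j → j ≤ n → dist (p i) (p j) = (j - i) * δ) {a b : ℝ}
    (ha : a ∈ Icc (0 : ℝ) n) (hb : b ∈ Icc (0 : ℝ) n) :
    dist (chainPath σ n p a) (chainPath σ n p b) = |a - b| * δ := by
  wlog hab : a ≤ b generalizing a b
  · rw [dist_comm, abs_sub_comm]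
    exact this hb ha (le_of_not_ge hab)
  rw [abs_of_nonpos (sub_nonpos.2 hab), chainPath, chainPath,
    dist_segment_points hσ hp (segIndex_mono n hab) (segIndex_add_one_le hn b)
      (sub_segIndex_mem_Icc hn ha) (sub_segIndex_mem_Icc hn hb) (by linarith)]
  ring

theorem dist_chainPath_le (hcon : IsConical σ) (hn : 1 ≤ n) {A B : ℝ}
    (hpq : ∀ i ≤ n, dist (p i) (q i) ≤ (1 - i / n) * A + (i / n) * B) {s : ℝ}
    (hs : s ∈ Icc (0 : ℝ) n) :
    dist (chainPath σ n p s) (chainPath σ n q s) ≤ (1 - s / n) * A + (s / n) * B := by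
  set i := segIndex n s
  have hi := segIndex_add_one_le hn s
  have ht := sub_segIndex_mem_Icc hn hs
  calc dist (chainPath σ n p s) (chainPath σ n q s)
      ≤ (1 - (s - i)) * dist (p i) (q i) + (s - i) * dist (p (i + 1)) (q (i + 1)) :=
        hcon _ _ _ _ _ ht
    _ ≤ (1 - (s - i)) * ((1 - i / n) * A + (i / n) * B) +
          (s - i) * ((1 - (i + 1 : ℕ) / n) * A + ((i + 1 : ℕ) / n) * B) := by
        gcongr
        · linarith [ht.2]
        · exact hpq i (by omega)
        · exact ht.1
        · exact hpq (i + 1) hi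
    _ = (1 - s / n) * A + (s / n) * B := by push_cast; ring

end ChainPath

/-- **Lemma 5.2.** Let `X` be a proper metric space with a conical geodesic bicombing `σ` and
let `n ≥ 1`. For all `x, y ∈ X` there exist unique points `p 0, …, p n` with `p 0 = x`,
`p n = y` and `p i = σ (p (i-1)) (p (i+1)) (1/2)` for `1 ≤ i ≤ n-1`; moreover, the map
`σ⁽ⁿ⁾` defined by `σ⁽ⁿ⁾ x y ((1-λ) i/n + λ (i+1)/n) = σ (p i) (p (i+1)) λ` is a conical
geodesic bicombing on `X`. -/
theorem midpoint_subdivision_bicombing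
    {X : Type*} [MetricSpace X] [ProperSpace X]
    (σ : X → X → ℝ → X) (hgeo : IsGeodesicBicombing σ) (hcon : IsConical σ)
    (n : ℕ) (hn : 1 ≤ n) :
    (∀ x y : X, ∃ p : ℕ → X, IsMidpointChain σ n x y p ∧
      ∀ q : ℕ → X, IsMidpointChain σ n x y q → ∀ i ≤ n, q i = p i) ∧
    ∃ σn : X → X → ℝ → X, IsGeodesicBicombing σn ∧ IsConical σn ∧
      ∀ (x y : X) (p : ℕ → X), IsMidpointChain σ n x y p →
        ∀ i : ℕ, i + 1 ≤ n → ∀ lam ∈ Set.Icc (0:ℝ) 1,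
          σn x y ((1 - lam) * ((i : ℝ) / n) + lam * (((i : ℝ) + 1) / n)) =
            σ (p i) (p (i + 1)) lam := by
  have hn0 : (0 : ℝ) < n := by exact_mod_cast hn
  have hscale : ∀ t ∈ Icc (0 : ℝ) 1, t * n ∈ Icc (0 : ℝ) n := fun t ht =>
    ⟨mul_nonneg ht.1 hn0.le, mul_le_of_le_one_left hn0.le ht.2⟩
  choose P hP using exists_isMidpointChain hgeo hcon hn
  refine ⟨fun x y => ⟨P x y, hP x y, fun q hq i hi => (hP x y).eq hcon hq hi⟩,
    fun x y t => chainPath σ n (P x y) (t * n),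
    ⟨fun x y => ?_, fun x y => ?_, fun x y s hs t ht => ?_⟩, fun x y x' y' t ht => ?_,
    fun x y p hp i hi lam hlam => ?_⟩
  · simpa [(hP x y).1, hgeo.1] using
      chainPath_natCast_add hgeo (p := P x y) (i := 0) hn (left_mem_Icc.2 zero_le_one)
  · have := chainPath_natCast_add hgeo (p := P x y) (i := n - 1) (by omega : n - 1 + 1 ≤ n)
      (right_mem_Icc.2 zero_le_one)
    rwa [Nat.cast_sub hn, Nat.cast_one, sub_add_cancel, Nat.sub_add_cancel hn, hgeo.2.1,
      (hP x y).2.1, ← one_mul (n : ℝ)] at this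
  · rw [dist_chainPath hgeo hn (fun i j hij hjn => (hP x y).dist_eq hgeo hcon hn hij hjn)
      (hscale s hs) (hscale t ht), ← sub_mul, abs_mul, Nat.abs_cast]
    field_simp
  · simpa [mul_div_cancel_right₀ _ hn0.ne'] using dist_chainPath_le hcon hn
      (fun i hi => (hP x y).dist_le_chord hcon (hP x' y') hi) (hscale t ht)
  · beta_reduce
    rw [show ((1 - lam) * (i / n) + lam * ((i + 1) / n)) * n = i + lam by field_simp; ring,
      chainPath_natCast_add hgeo hi hlam, (hP x y).eq hcon hp (by omega), (hP x y).eq hcon hp hi]
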